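/- arXiv:2101.02208 — 2 statements merged into one kernel-verified Lean document; each statement's English description precedes it below -/
import Mathlib

section
/- Let g be a metric on an open set Ω ⊆ ℝ^m and let τ be a smooth timelike covector field (Σ_{i,j} g^{ij} τ_i τ_j < 0 everywhere) satisfying ∇_i τ_j = κ g_{ij} + α_i τ_j + τ_i β_j with Σ_{i,j} g^{ij} α_i τ_j = 0 and Σ_{i,j} g^{ij} β_i τ_j = 0. Define N = √(−Σ_{i,j} g^{ij} τ_i τ_j) > 0. Then for every index i and every point of Ω, ∂_i N = −κ τ_i / N + N α_i. -/
open scoped BigOperators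

/-- Partial derivative of `f : ℝ^m → ℝ` in the `i`-th coordinate direction. -/
noncomputable def pd {m : ℕ} (i : Fin m) (f : (Fin m → ℝ) → ℝ) (x : Fin m → ℝ) : ℝ :=
  fderiv ℝ f x (Pi.single i 1)

/-- Christoffel symbols `Γ^k_{ij}` of a matrix-valued field `g`. -/
noncomputable def Christoffel {m : ℕ} (g : (Fin m → ℝ) → Matrix (Fin m) (Fin m) ℝ)
    (k i j : Fin m) (x : Fin m → ℝ) : ℝ :=
  (1 / 2) * ∑ l, (g x)⁻¹ k l *
    (pd i (fun y => g y l j) x + pd j (fun y => g y l i) x - pd l (fun y => g y i j) x)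

/-- Covariant derivative `∇_i τ_j` of a covector field `τ`. -/
noncomputable def covDeriv {m : ℕ} (g : (Fin m → ℝ) → Matrix (Fin m) (Fin m) ℝ)
    (τ : (Fin m → ℝ) → Fin m → ℝ) (i j : Fin m) (x : Fin m → ℝ) : ℝ :=
  pd i (fun y => τ y j) x - ∑ k, Christoffel g k i j x * τ x k

/-- `g` is a metric on `Ω`: smooth, symmetric and invertible there. -/
def IsMetricOn {m : ℕ} (g : (Fin m → ℝ) → Matrix (Fin m) (Fin m) ℝ)
    (Ω : Set (Fin m → ℝ)) : Prop :=
  (∀ i j, ContDiffOn ℝ (⊤ : ℕ∞) (fun x => g x i j) Ω) ∧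
  (∀ x ∈ Ω, (g x).IsSymm) ∧ (∀ x ∈ Ω, IsUnit (g x).det)

section helpers
variable {m : ℕ} {i : Fin m} {x : Fin m → ℝ} {f h : (Fin m → ℝ) → ℝ}

lemma pd_congr (hfh : f =ᶠ[nhds x] h) : pd i f x = pd i h x := by
  unfold pd; rw [hfh.fderiv_eq]

lemma pd_const (c : ℝ) : pd i (fun _ => c) x = 0 := by
  unfold pd; rw [fderiv_fun_const]; simp

lemma pd_of_hasFDerivAt {L : (Fin m → ℝ) →L[ℝ] ℝ} (hf : HasFDerivAt f L x) :
    pd i f x = L (Pi.single i 1) := by unfold pd; rw [hf.fderiv]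

lemma pd_mul (hf : DifferentiableAt ℝ f x) (hh : DifferentiableAt ℝ h x) :
    pd i (fun y => f y * h y) x = pd i f x * h x + f x * pd i h x := by
  unfold pd
  rw [fderiv_fun_mul hf hh]
  simp [mul_comm]
  ring

lemma pd_sum {ι : Type*} (s : Finset ι) (F : ι → (Fin m → ℝ) → ℝ)
    (hF : ∀ j ∈ s, DifferentiableAt ℝ (F j) x) :
    pd i (fun y => ∑ j ∈ s, F j y) x = ∑ j ∈ s, pd i (F j) x := by
  unfold pd
  rw [fderiv_fun_sum hF]
  simp

lemma differentiableAt_det {M : (Fin m → ℝ) → Matrix (Fin m) (Fin m) ℝ}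
    (h : ∀ a b, DifferentiableAt ℝ (fun y => M y a b) x) :
    DifferentiableAt ℝ (fun y => (M y).det) x := by
  simp only [Matrix.det_apply']
  apply DifferentiableAt.fun_sum
  intro σ _
  apply DifferentiableAt.const_mul
  exact (HasFDerivAt.finset_prod (u := Finset.univ)
    (fun a _ => (h (σ a) a).hasFDerivAt)).differentiableAt

lemma ginv_entry (A : Matrix (Fin m) (Fin m) ℝ) (k l : Fin m) :
    A⁻¹ k l = (A.det)⁻¹ * (A.updateRow l (Pi.single k 1)).det := by
  rw [Matrix.inv_def, Matrix.smul_apply, Matrix.adjugate_apply, Ring.inverse_eq_inv']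
  simp [smul_eq_mul]

lemma differentiableAt_ginv {M : (Fin m → ℝ) → Matrix (Fin m) (Fin m) ℝ}
    (h : ∀ a b, DifferentiableAt ℝ (fun y => M y a b) x)
    (hdet : (M x).det ≠ 0) (k l : Fin m) :
    DifferentiableAt ℝ (fun y => (M y)⁻¹ k l) x := by
  have : (fun y => (M y)⁻¹ k l)
      = fun y => ((M y).det)⁻¹ * ((M y).updateRow l (Pi.single k 1)).det := by
    funext y; exact ginv_entry (M y) k l
  rw [this]
  apply DifferentiableAt.mul
  · exact (differentiableAt_det h).inv hdet
  · apply differentiableAt_det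
    intro a b
    by_cases hal : a = l
    · subst hal
      simp only [Matrix.updateRow_self]
      exact differentiableAt_const _
    · simp only [Matrix.updateRow_ne hal]
      exact h a b
end helpers

lemma sum4_swap {m : ℕ} (F : Fin m → Fin m → Fin m → Fin m → ℝ) :
    ∑ a, ∑ b, ∑ c, ∑ e, F a b c e = ∑ c, ∑ e, ∑ a, ∑ b, F a b c e := by
  calc ∑ a, ∑ b, ∑ c, ∑ e, F a b c e
      = ∑ a, ∑ c, ∑ b, ∑ e, F a b c e :=
        Finset.sum_congr rfl fun a _ => Finset.sum_comm
    _ = ∑ c, ∑ a, ∑ b, ∑ e, F a b c e := Finset.sum_comm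
    _ = ∑ c, ∑ a, ∑ e, ∑ b, F a b c e :=
        Finset.sum_congr rfl fun c _ => Finset.sum_congr rfl fun a _ => Finset.sum_comm
    _ = ∑ c, ∑ e, ∑ a, ∑ b, F a b c e :=
        Finset.sum_congr rfl fun c _ => Finset.sum_comm

lemma key_sum {m : ℕ} (H G : Fin m → Fin m → ℝ) (dG : Fin m → Fin m → Fin m → ℝ)
    (T dT : Fin m → ℝ) (dH : Fin m → Fin m → ℝ) (i : Fin m) (k0 αi Ti : ℝ)
    (βv : Fin m → ℝ)
    (hHsym : ∀ a b, H a b = H b a)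
    (hdGsym : ∀ d a b, dG d a b = dG d b a)
    (hGH : ∀ a b, (∑ c, G a c * H c b) = if a = b then (1:ℝ) else 0)
    (hβ0 : ∑ a, ∑ b, H a b * βv a * T b = 0)
    (hdT : ∀ j, dT j = k0 * G i j + αi * T j + Ti * βv j
      + ∑ l, ((1/2) * ∑ c, H l c * (dG i c j + dG j c i - dG c i j)) * T l)
    (hdH : ∀ b l, dH b l = -∑ c, ∑ a, H b a * dG i a c * H c l) :
    ∑ a, ∑ b, ((dH a b * T a + H a b * dT a) * T b + H a b * T a * dT b)
      = 2 * k0 * T i + 2 * (∑ a, ∑ b, H a b * T a * T b) * αi := by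
  set u : Fin m → ℝ := fun a => ∑ c, H a c * T c with hu
  -- split LHS into three double sums
  have split : ∑ a, ∑ b, ((dH a b * T a + H a b * dT a) * T b + H a b * T a * dT b)
      = (∑ a, ∑ b, dH a b * T a * T b) + (∑ a, ∑ b, H a b * dT a * T b)
        + (∑ a, ∑ b, H a b * T a * dT b) := by
    simp only [← Finset.sum_add_distrib]
    exact Finset.sum_congr rfl fun a _ => Finset.sum_congr rfl fun b _ => by ring
  -- third equals second
  have hS3 : (∑ a, ∑ b, H a b * T a * dT b) = ∑ a, ∑ b, H a b * dT a * T b := by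
    rw [Finset.sum_comm]
    exact Finset.sum_congr rfl fun b _ => Finset.sum_congr rfl fun a _ => by
      rw [hHsym]; ring
  -- S1 as a contracted quadruple sum
  have hS1 : (∑ a, ∑ b, dH a b * T a * T b)
      = -∑ c, ∑ e, u c * u e * dG i c e := by
    have h1 : ∀ a b, dH a b * T a * T b
        = -∑ c, ∑ e, H a c * T a * (H e b * T b) * dG i c e := by
      intro a b
      rw [hdH a b, Finset.sum_comm, neg_mul, neg_mul, neg_inj, Finset.sum_mul,
        Finset.sum_mul]
      exact Finset.sum_congr rfl fun c _ => by
        rw [Finset.sum_mul, Finset.sum_mul]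
        exact Finset.sum_congr rfl fun e _ => by ring
    have h2 : ∀ c e, u c * u e * dG i c e
        = ∑ a, ∑ b, H a c * T a * (H e b * T b) * dG i c e := by
      intro c e
      calc u c * u e * dG i c e
          = (∑ a, ∑ b, (H c a * T a) * (H e b * T b)) * dG i c e := by
            rw [hu]; rw [Finset.sum_mul_sum]
        _ = ∑ a, ∑ b, H a c * T a * (H e b * T b) * dG i c e := by
            rw [Finset.sum_mul]
            refine Finset.sum_congr rfl fun a _ => ?_
            rw [Finset.sum_mul]
            exact Finset.sum_congr rfl fun b _ => by rw [hHsym c a]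
    calc (∑ a, ∑ b, dH a b * T a * T b)
        = ∑ a, ∑ b, -∑ c, ∑ e, H a c * T a * (H e b * T b) * dG i c e :=
          Finset.sum_congr rfl fun a _ => Finset.sum_congr rfl fun b _ => h1 a b
      _ = -∑ a, ∑ b, ∑ c, ∑ e, H a c * T a * (H e b * T b) * dG i c e := by
          simp
      _ = -∑ c, ∑ e, ∑ a, ∑ b, H a c * T a * (H e b * T b) * dG i c e := by
          rw [sum4_swap]
      _ = -∑ c, ∑ e, u c * u e * dG i c e := by
          rw [neg_inj]
          exact Finset.sum_congr rfl fun c _ => Finset.sum_congr rfl fun e _ =>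
            (h2 c e).symm
  have hu' : ∀ a, (∑ c, H c a * T c) = u a :=
    fun a => Finset.sum_congr rfl fun c _ => by rw [hHsym]
  -- split S2 into four pieces using hdT
  have hsplit2 : (∑ a, ∑ b, H a b * dT a * T b)
      = (∑ a, ∑ b, H a b * (k0 * G i a) * T b)
        + (∑ a, ∑ b, H a b * (αi * T a) * T b)
        + (∑ a, ∑ b, H a b * (Ti * βv a) * T b)
        + (∑ a, ∑ b, H a b *
            (∑ l, ((1/2) * ∑ c, H l c * (dG i c a + dG a c i - dG c i a)) * T l) * T b) := by
    simp only [← Finset.sum_add_distrib]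
    exact Finset.sum_congr rfl fun a _ => Finset.sum_congr rfl fun b _ => by
      rw [hdT a]; ring
  have hP1 : (∑ a, ∑ b, H a b * (k0 * G i a) * T b) = k0 * T i := by
    rw [Finset.sum_comm]
    have h3 : ∀ b, (∑ a, H a b * (k0 * G i a) * T b)
        = k0 * T b * (if i = b then (1:ℝ) else 0) := by
      intro b
      rw [← hGH i b, Finset.mul_sum]
      exact Finset.sum_congr rfl fun a _ => by ring
    rw [Finset.sum_congr rfl fun b _ => h3 b]
    simp
  have hP2 : (∑ a, ∑ b, H a b * (αi * T a) * T b)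
      = αi * ∑ a, ∑ b, H a b * T a * T b := by
    rw [Finset.mul_sum]
    refine Finset.sum_congr rfl fun a _ => ?_
    rw [Finset.mul_sum]
    exact Finset.sum_congr rfl fun b _ => by ring
  have hP3 : (∑ a, ∑ b, H a b * (Ti * βv a) * T b) = 0 := by
    have h3 : (∑ a, ∑ b, H a b * (Ti * βv a) * T b)
        = Ti * ∑ a, ∑ b, H a b * βv a * T b := by
      rw [Finset.mul_sum]
      refine Finset.sum_congr rfl fun a _ => ?_
      rw [Finset.mul_sum]
      exact Finset.sum_congr rfl fun b _ => by ring
    rw [h3, hβ0, mul_zero]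
  -- the Christoffel piece
  have hP4 : (∑ a, ∑ b, H a b *
        (∑ l, ((1/2) * ∑ c, H l c * (dG i c a + dG a c i - dG c i a)) * T l) * T b)
      = (1/2) * ∑ c, ∑ e, u c * u e * dG i c e := by
    have hC : ∀ a, (∑ l, ((1/2) * ∑ c, H l c * (dG i c a + dG a c i - dG c i a)) * T l)
        = (1/2) * ∑ c, u c * (dG i c a + dG a c i - dG c i a) := by
      intro a
      rw [Finset.mul_sum]
      rw [show (∑ l, ((1/2) * ∑ c, H l c * (dG i c a + dG a c i - dG c i a)) * T l)
          = ∑ l, ∑ c, (1/2) * (H l c * T l * (dG i c a + dG a c i - dG c i a)) from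
        Finset.sum_congr rfl fun l _ => by
          simp only [Finset.mul_sum, Finset.sum_mul]
          exact Finset.sum_congr rfl fun c _ => by ring]
      rw [Finset.sum_comm]
      refine Finset.sum_congr rfl fun c _ => ?_
      rw [← hu' c, Finset.sum_mul, Finset.mul_sum]
    have hstep : (∑ a, ∑ b, H a b *
          (∑ l, ((1/2) * ∑ c, H l c * (dG i c a + dG a c i - dG c i a)) * T l) * T b)
        = (1/2) * ∑ a, ∑ c, u a * u c * (dG i c a + dG a c i - dG c i a) := by
      rw [Finset.mul_sum]
      refine Finset.sum_congr rfl fun a _ => ?_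
      have h4 : (∑ b, H a b *
            (∑ l, ((1/2) * ∑ c, H l c * (dG i c a + dG a c i - dG c i a)) * T l) * T b)
          = u a * ((1/2) * ∑ c, u c * (dG i c a + dG a c i - dG c i a)) := by
        rw [← hC a, hu, Finset.sum_mul]
        exact Finset.sum_congr rfl fun b _ => by ring
      rw [h4]
      simp only [Finset.mul_sum]
      exact Finset.sum_congr rfl fun c _ => by ring
    rw [hstep]
    have hA23 : (∑ a, ∑ c, u a * u c * dG a c i)
        = ∑ a, ∑ c, u a * u c * dG c i a := by
      rw [Finset.sum_comm]
      refine Finset.sum_congr rfl fun c _ => Finset.sum_congr rfl fun a _ => ?_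
      rw [hdGsym a c i]; ring
    have hsplit3 : (∑ a, ∑ c, u a * u c * (dG i c a + dG a c i - dG c i a))
        = (∑ a, ∑ c, u a * u c * dG i c a) + (∑ a, ∑ c, u a * u c * dG a c i)
          - (∑ a, ∑ c, u a * u c * dG c i a) := by
      rw [← Finset.sum_add_distrib, ← Finset.sum_sub_distrib]
      refine Finset.sum_congr rfl fun a _ => ?_
      rw [← Finset.sum_add_distrib, ← Finset.sum_sub_distrib]
      exact Finset.sum_congr rfl fun c _ => by ring
    have hX1 : (∑ a, ∑ c, u a * u c * dG i c a)
        = ∑ c, ∑ e, u c * u e * dG i c e := by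
      rw [Finset.sum_comm]
      exact Finset.sum_congr rfl fun c _ => Finset.sum_congr rfl fun a _ => by ring
    rw [hsplit3, hA23, hX1]
    ring
  rw [split, hS3, hS1, hsplit2, hP1, hP2, hP3, hP4]
  ring


/-- with `N = √(-τ^i τ_i) > 0`, one has `∂_i N = -κ τ_i / N + N α_i`. -/
theorem doubly_torqued_norm_gradient
    {m : ℕ} (Ω : Set (Fin m → ℝ)) (hΩ : IsOpen Ω)
    (g : (Fin m → ℝ) → Matrix (Fin m) (Fin m) ℝ) (hg : IsMetricOn g Ω)
    (τ : (Fin m → ℝ) → Fin m → ℝ) (hτ : ∀ j, ContDiffOn ℝ (⊤ : ℕ∞) (fun x => τ x j) Ω)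
    (κ : (Fin m → ℝ) → ℝ) (hκ : ContDiffOn ℝ (⊤ : ℕ∞) κ Ω)
    (α β : (Fin m → ℝ) → Fin m → ℝ)
    (hα : ∀ j, ContDiffOn ℝ (⊤ : ℕ∞) (fun x => α x j) Ω)
    (hβ : ∀ j, ContDiffOn ℝ (⊤ : ℕ∞) (fun x => β x j) Ω)
    (heq : ∀ x ∈ Ω, ∀ i j : Fin m,
      covDeriv g τ i j x = κ x * g x i j + α x i * τ x j + τ x i * β x j)
    (hατ : ∀ x ∈ Ω, ∑ i, ∑ j, (g x)⁻¹ i j * α x i * τ x j = 0)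
    (hβτ : ∀ x ∈ Ω, ∑ i, ∑ j, (g x)⁻¹ i j * β x i * τ x j = 0)
    (hτtime : ∀ x ∈ Ω, ∑ i, ∑ j, (g x)⁻¹ i j * τ x i * τ x j < 0)
    (N : (Fin m → ℝ) → ℝ)
    (hN : ∀ x, N x = Real.sqrt (-(∑ i, ∑ j, (g x)⁻¹ i j * τ x i * τ x j))) :
    ∀ x ∈ Ω, 0 < N x ∧ ∀ i : Fin m, pd i N x = -(κ x) * τ x i / N x + N x * α x i := by
  obtain ⟨hgs, hgsym, hgu⟩ := hg
  intro x hx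
  have hmem : Ω ∈ nhds x := hΩ.mem_nhds hx
  have hdg : ∀ a b, DifferentiableAt ℝ (fun y => g y a b) x := fun a b =>
    ((hgs a b).contDiffAt hmem).differentiableAt (by simp)
  have hdτ : ∀ a, DifferentiableAt ℝ (fun y => τ y a) x := fun a =>
    ((hτ a).contDiffAt hmem).differentiableAt (by simp)
  have hdetne : (g x).det ≠ 0 := (hgu x hx).ne_zero
  have hdHd : ∀ a b, DifferentiableAt ℝ (fun y => (g y)⁻¹ a b) x :=
    fun a b => differentiableAt_ginv hdg hdetne a b
  have hHsym : ∀ a b, (g x)⁻¹ a b = (g x)⁻¹ b a := by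
    have h1 : Matrix.transpose ((g x)⁻¹) = (g x)⁻¹ := by
      rw [Matrix.transpose_nonsing_inv, (hgsym x hx).eq]
    intro a b
    nth_rewrite 1 [← h1]
    rw [Matrix.transpose_apply]
  have hGH : ∀ a b, (∑ c, g x a c * (g x)⁻¹ c b) = if a = b then (1:ℝ) else 0 := by
    intro a b
    have h1 := Matrix.mul_nonsing_inv (g x) (hgu x hx)
    have h2 := congrFun (congrFun h1 a) b
    simpa [Matrix.mul_apply, Matrix.one_apply] using h2
  have hdGsym : ∀ (d a b : Fin m),
      pd d (fun y => g y a b) x = pd d (fun y => g y b a) x := by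
    intro d a b
    apply pd_congr
    filter_upwards [hmem] with y hy
    exact (hgsym y hy).apply b a
  set Q : (Fin m → ℝ) → ℝ := fun y => ∑ a, ∑ b, (g y)⁻¹ a b * τ y a * τ y b with hQdef
  have hdF1 : ∀ a b, DifferentiableAt ℝ (fun y => (g y)⁻¹ a b * τ y a * τ y b) x :=
    fun a b => ((hdHd a b).mul (hdτ a)).mul (hdτ b)
  have hdF2 : ∀ a, DifferentiableAt ℝ (fun y => ∑ b, (g y)⁻¹ a b * τ y a * τ y b) x :=
    fun a => DifferentiableAt.fun_sum fun b _ => hdF1 a b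
  have hQdiff : DifferentiableAt ℝ Q x := DifferentiableAt.fun_sum fun a _ => hdF2 a
  have hQneg : Q x < 0 := hτtime x hx
  have hNx : N x = Real.sqrt (-(Q x)) := hN x
  have hNpos : 0 < N x := by rw [hNx]; exact Real.sqrt_pos.mpr (by linarith)
  refine ⟨hNpos, fun i => ?_⟩
  -- derivative of inverse metric entries
  have hdHf : ∀ b l, pd i (fun y => (g y)⁻¹ b l) x
      = -∑ c, ∑ a, (g x)⁻¹ b a * pd i (fun y => g y a c) x * (g x)⁻¹ c l := by
    intro b l
    have E1 : ∀ c, (∑ a, (pd i (fun y => (g y)⁻¹ b a) x * g x a c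
          + (g x)⁻¹ b a * pd i (fun y => g y a c) x)) = 0 := by
      intro c
      have h0 : pd i (fun y => ∑ a, (g y)⁻¹ b a * g y a c) x = 0 := by
        have he : (fun y => ∑ a, (g y)⁻¹ b a * g y a c) =ᶠ[nhds x]
            (fun _ => if b = c then (1:ℝ) else 0) := by
          filter_upwards [hmem] with y hy
          have h1 := Matrix.nonsing_inv_mul (g y) (hgu y hy)
          have h2 := congrFun (congrFun h1 b) c
          simpa [Matrix.mul_apply, Matrix.one_apply] using h2
        rw [pd_congr he, pd_const]
      rw [pd_sum Finset.univ _ (fun a _ => (hdHd b a).fun_mul (hdg a c))] at h0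
      rw [Finset.sum_congr rfl (fun a _ => pd_mul (hdHd b a) (hdg a c))] at h0
      exact h0
    have E2 : ∀ c, (∑ a, pd i (fun y => (g y)⁻¹ b a) x * g x a c)
        = -∑ a, (g x)⁻¹ b a * pd i (fun y => g y a c) x := by
      intro c
      have h3 := E1 c
      rw [Finset.sum_add_distrib] at h3
      linarith
    calc pd i (fun y => (g y)⁻¹ b l) x
        = ∑ a, pd i (fun y => (g y)⁻¹ b a) x * (if a = l then (1:ℝ) else 0) := by
          simp [mul_ite, Finset.sum_ite_eq']
      _ = ∑ a, pd i (fun y => (g y)⁻¹ b a) x * (∑ c, g x a c * (g x)⁻¹ c l) :=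
          Finset.sum_congr rfl fun a _ => by rw [hGH a l]
      _ = ∑ c, (∑ a, pd i (fun y => (g y)⁻¹ b a) x * g x a c) * (g x)⁻¹ c l := by
          simp only [Finset.mul_sum, Finset.sum_mul]
          rw [Finset.sum_comm]
          exact Finset.sum_congr rfl fun c _ => Finset.sum_congr rfl fun a _ => by ring
      _ = ∑ c, (-∑ a, (g x)⁻¹ b a * pd i (fun y => g y a c) x) * (g x)⁻¹ c l :=
          Finset.sum_congr rfl fun c _ => by rw [E2 c]
      _ = -∑ c, ∑ a, (g x)⁻¹ b a * pd i (fun y => g y a c) x * (g x)⁻¹ c l := by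
          rw [← Finset.sum_neg_distrib]
          refine Finset.sum_congr rfl fun c _ => ?_
          rw [neg_mul, Finset.sum_mul]
  -- derivative of τ entries from the torqued equation
  have hdTf : ∀ j, pd i (fun y => τ y j) x = κ x * g x i j + α x i * τ x j
      + τ x i * β x j + ∑ l, Christoffel g l i j x * τ x l := by
    intro j
    have h1 := heq x hx i j
    simp only [covDeriv] at h1
    linarith
  -- the key algebraic identity
  have hkey := key_sum (fun a b => (g x)⁻¹ a b) (fun a b => g x a b)
      (fun d a b => pd d (fun y => g y a b) x)
      (fun a => τ x a) (fun a => pd i (fun y => τ y a) x)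
      (fun a b => pd i (fun y => (g y)⁻¹ a b) x) i (κ x) (α x i) (τ x i)
      (fun a => β x a)
      hHsym hdGsym hGH (hβτ x hx) hdTf hdHf
  -- compute pd i Q x
  have hpdQ1 : pd i Q x = ∑ a, ∑ b,
      ((pd i (fun y => (g y)⁻¹ a b) x * τ x a + (g x)⁻¹ a b * pd i (fun y => τ y a) x) * τ x b
        + (g x)⁻¹ a b * τ x a * pd i (fun y => τ y b) x) := by
    calc pd i Q x
        = ∑ a, pd i (fun y => ∑ b, (g y)⁻¹ a b * τ y a * τ y b) x :=
          pd_sum Finset.univ (fun a => fun y => ∑ b, (g y)⁻¹ a b * τ y a * τ y b)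
            (fun a _ => hdF2 a)
      _ = ∑ a, ∑ b, ((pd i (fun y => (g y)⁻¹ a b) x * τ x a
            + (g x)⁻¹ a b * pd i (fun y => τ y a) x) * τ x b
            + (g x)⁻¹ a b * τ x a * pd i (fun y => τ y b) x) := by
          refine Finset.sum_congr rfl fun a _ => ?_
          rw [pd_sum Finset.univ (fun b => fun y => (g y)⁻¹ a b * τ y a * τ y b)
            (fun b _ => hdF1 a b)]
          refine Finset.sum_congr rfl fun b _ => ?_
          rw [pd_mul ((hdHd a b).fun_mul (hdτ a)) (hdτ b), pd_mul (hdHd a b) (hdτ a)]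
  have hQval : pd i Q x = 2 * κ x * τ x i + 2 * Q x * α x i := by
    rw [hpdQ1]
    rw [show Q x = ∑ a, ∑ b, (g x)⁻¹ a b * τ x a * τ x b from rfl]
    exact hkey
  -- derivative of N
  have hNfun : N = fun y => Real.sqrt (-(Q y)) := funext fun y => hN y
  have hsq : N x ^ 2 = -(Q x) := by
    rw [hNx]; exact Real.sq_sqrt (by linarith)
  have hL : HasFDerivAt N
      ((1 / (2 * Real.sqrt (-(Q x)))) • (-(fderiv ℝ Q x))) x := by
    rw [hNfun]
    exact HasFDerivAt.sqrt (hQdiff.hasFDerivAt.neg) (by linarith)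
  have hpdN : pd i N x = (1 / (2 * N x)) * (-(pd i Q x)) := by
    rw [pd_of_hasFDerivAt hL, hNx]
    simp only [ContinuousLinearMap.coe_smul', Pi.smul_apply,
      ContinuousLinearMap.neg_apply, smul_eq_mul]
    rfl
  have hQx2 : Q x = -(N x ^ 2) := by linarith
  rw [hpdN, hQval, hQx2]
  have hNne : N x ≠ 0 := ne_of_gt hNpos
  field_simp
  ring
end

section
/- Let g be a metric on an open set Ω ⊆ ℝ^m, let τ be a smooth timelike covector field (Σ_{i,j} g^{ij} τ_i τ_j < 0 everywhere) satisfying ∇_i τ_j = κ g_{ij} + α_i τ_j + τ_i β_j with Σ_{i,j} g^{ij} α_i τ_j = 0 and Σ_{i,j} g^{ij} β_i τ_j = 0, and let θ : Ω → ℝ be smooth. Let ĝ = e^{2θ} g with covariant derivative ∇̂ built from the Christoffel symbols of ĝ, let τ̂_i = e^{2θ} τ_i, and define the projection h_i{}^k = δ_i^k − τ_i (Σ_l g^{kl} τ_l)/(Σ_{p,q} g^{pq} τ_p τ_q) and the scalar P = Σ_{k,l} g^{kl} τ_k ∂_l θ. Then ∇̂_i τ̂_j = (κ + P) ĝ_{ij}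 + (α_i + Σ_k h_i{}^k ∂_k θ) τ̂_j + τ̂_i (β_j − Σ_k h_j{}^k ∂_k θ) on Ω, and the orthogonality conditions Σ_{i,j} ĝ^{ij} (α_i + Σ_k h_i{}^k ∂_k θ) τ̂_j = 0 and Σ_{i,j} ĝ^{ij} (β_i − Σ_k h_i{}^k ∂_k θ) τ̂_j = 0 hold; that is, τ̂ is a doubly torqued vector field for ĝ. -/
open scoped BigOperators

private lemma pd_exp_mul {m : ℕ} {θ f : (Fin m → ℝ) → ℝ} {x : Fin m → ℝ}
    (hθ : DifferentiableAt ℝ θ x) (hf : DifferentiableAt ℝ f x) (i : Fin m) :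
    pd i (fun y => Real.exp (2 * θ y) * f y) x
      = Real.exp (2 * θ x) * (2 * pd i θ x * f x + pd i f x) := by
  have hE : DifferentiableAt ℝ (fun y => Real.exp (2 * θ y)) x := (hθ.const_mul 2).exp
  have h1 := fderiv_fun_mul hE hf
  have h2 : fderiv ℝ (fun y => Real.exp (2 * θ y)) x
      = Real.exp (2 * θ x) • fderiv ℝ (fun y => 2 * θ y) x := fderiv_exp (hθ.const_mul 2)
  have h3 : fderiv ℝ (fun y => 2 * θ y) x = (2:ℝ) • fderiv ℝ θ x := fderiv_const_mul hθ 2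
  simp only [pd, h1, h2, h3, ContinuousLinearMap.add_apply, ContinuousLinearMap.smul_apply,
    smul_eq_mul]
  ring


/-- under `ĝ = e^{2θ} g`, the vector `τ̂ = e^{2θ} τ` is again
doubly torqued, with parameters expressed via the projection `h` and `P = τ^l ∂_l θ`. -/
theorem conformal_doubly_torqued
    {m : ℕ} (Ω : Set (Fin m → ℝ)) (hΩ : IsOpen Ω)
    (g : (Fin m → ℝ) → Matrix (Fin m) (Fin m) ℝ) (hg : IsMetricOn g Ω)
    (τ : (Fin m → ℝ) → Fin m → ℝ) (hτ : ∀ j, ContDiffOn ℝ (⊤ : ℕ∞) (fun x => τ x j) Ω)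
    (κ : (Fin m → ℝ) → ℝ) (hκ : ContDiffOn ℝ (⊤ : ℕ∞) κ Ω)
    (hτtime : ∀ x ∈ Ω, ∑ i, ∑ j, (g x)⁻¹ i j * τ x i * τ x j < 0)
    (α β : (Fin m → ℝ) → Fin m → ℝ)
    (hα : ∀ j, ContDiffOn ℝ (⊤ : ℕ∞) (fun x => α x j) Ω)
    (hβ : ∀ j, ContDiffOn ℝ (⊤ : ℕ∞) (fun x => β x j) Ω)
    (heq : ∀ x ∈ Ω, ∀ i j : Fin m,
      covDeriv g τ i j x = κ x * g x i j + α x i * τ x j + τ x i * β x j)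
    (hατ : ∀ x ∈ Ω, ∑ i, ∑ j, (g x)⁻¹ i j * α x i * τ x j = 0)
    (hβτ : ∀ x ∈ Ω, ∑ i, ∑ j, (g x)⁻¹ i j * β x i * τ x j = 0)
    (θ : (Fin m → ℝ) → ℝ) (hθ : ContDiffOn ℝ (⊤ : ℕ∞) θ Ω)
    (ghat : (Fin m → ℝ) → Matrix (Fin m) (Fin m) ℝ)
    (hghat : ∀ x, ghat x = Matrix.of fun i j => Real.exp (2 * θ x) * g x i j)
    (τh : (Fin m → ℝ) → Fin m → ℝ)
    (hτh : ∀ x i, τh x i = Real.exp (2 * θ x) * τ x i)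
    (h : (Fin m → ℝ) → Fin m → Fin m → ℝ)
    (hh : ∀ x, ∀ i k : Fin m, h x i k =
      (if i = k then (1 : ℝ) else 0) -
        τ x i * (∑ l, (g x)⁻¹ k l * τ x l) /
          (∑ p, ∑ q, (g x)⁻¹ p q * τ x p * τ x q))
    (P : (Fin m → ℝ) → ℝ)
    (hP : ∀ x, P x = ∑ k, ∑ l, (g x)⁻¹ k l * τ x k * pd l θ x) :
    ∀ x ∈ Ω,
      (∀ i j : Fin m,
        covDeriv ghat τh i j x =
          (κ x + P x) * ghat x i j
          + (α x i + ∑ k, h x i k * pd k θ x) * τh x j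
          + τh x i * (β x j - ∑ k, h x j k * pd k θ x)) ∧
      (∑ i, ∑ j, (ghat x)⁻¹ i j *
        (α x i + ∑ k, h x i k * pd k θ x) * τh x j = 0) ∧
      (∑ i, ∑ j, (ghat x)⁻¹ i j *
        (β x i - ∑ k, h x i k * pd k θ x) * τh x j = 0) := by
  intro x hx
  have hmem : Ω ∈ nhds x := hΩ.mem_nhds hx
  have hdθ : DifferentiableAt ℝ θ x := (hθ.contDiffAt hmem).differentiableAt (by simp)
  have hdτ : ∀ j, DifferentiableAt ℝ (fun y => τ y j) x :=
    fun j => ((hτ j).contDiffAt hmem).differentiableAt (by simp)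
  have hdg : ∀ i j, DifferentiableAt ℝ (fun y => g y i j) x :=
    fun i j => ((hg.1 i j).contDiffAt hmem).differentiableAt (by simp)
  set E := Real.exp (2 * θ x) with hEdef
  have hE0 : E ≠ 0 := Real.exp_ne_zero _
  -- inverse of ghat
  have hsmul : ghat x = E • g x := by
    rw [hghat]; ext i j; simp [Matrix.smul_apply, smul_eq_mul, hEdef]
  have hinv : (ghat x)⁻¹ = E⁻¹ • (g x)⁻¹ := by
    have h1 : (E⁻¹ • (g x)⁻¹) * (E • g x) = 1 := by
      rw [Matrix.smul_mul, Matrix.mul_smul, Matrix.nonsing_inv_mul _ (hg.2.2 x hx), smul_smul,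
        inv_mul_cancel₀ hE0, one_smul]
    rw [hsmul, Matrix.inv_eq_left_inv h1]
  have hginv : ∀ k l, (ghat x)⁻¹ k l = E⁻¹ * (g x)⁻¹ k l := by
    intro k l; rw [hinv]; simp [Matrix.smul_apply, smul_eq_mul]
  -- delta
  have hδ : ∀ k j, (∑ l, (g x)⁻¹ k l * g x l j) = if k = j then (1:ℝ) else 0 := by
    intro k j
    have h1 : ((g x)⁻¹ * g x) k j = (1 : Matrix (Fin m) (Fin m) ℝ) k j := by
      rw [Matrix.nonsing_inv_mul _ (hg.2.2 x hx)]
    rw [Matrix.mul_apply, Matrix.one_apply] at h1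
    exact h1
  -- derivatives of ghat entries
  have hpdg : ∀ (i l j : Fin m), pd i (fun y => ghat y l j) x
      = E * (2 * pd i θ x * g x l j + pd i (fun y => g y l j) x) := by
    intro i l j
    have hfun : (fun y => ghat y l j) = fun y => Real.exp (2 * θ y) * g y l j := by
      funext y; rw [hghat]; rfl
    rw [hfun, pd_exp_mul hdθ (hdg l j) i]
  have hpdτh : ∀ (i j : Fin m), pd i (fun y => τh y j) x
      = E * (2 * pd i θ x * τ x j + pd i (fun y => τ y j) x) := by
    intro i j
    have hfun : (fun y => τh y j) = fun y => Real.exp (2 * θ y) * τ y j := by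
      funext y; rw [hτh]
    rw [hfun, pd_exp_mul hdθ (hdτ j) i]
  -- Christoffel transformation
  have hΓ : ∀ k i j, Christoffel ghat k i j x
      = Christoffel g k i j x + pd i θ x * (if k = j then (1:ℝ) else 0)
        + pd j θ x * (if k = i then (1:ℝ) else 0)
        - g x i j * ∑ l, (g x)⁻¹ k l * pd l θ x := by
    intro k i j
    unfold Christoffel
    have step : ∀ l : Fin m, (ghat x)⁻¹ k l *
        (pd i (fun y => ghat y l j) x + pd j (fun y => ghat y l i) x
          - pd l (fun y => ghat y i j) x)
        = (g x)⁻¹ k l * (pd i (fun y => g y l j) x + pd j (fun y => g y l i) x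
            - pd l (fun y => g y i j) x)
          + 2 * (pd i θ x * ((g x)⁻¹ k l * g x l j) + pd j θ x * ((g x)⁻¹ k l * g x l i)
            - g x i j * ((g x)⁻¹ k l * pd l θ x)) := by
      intro l
      rw [hginv, hpdg, hpdg, hpdg]
      field_simp
      ring
    rw [Finset.sum_congr rfl fun l _ => step l, Finset.sum_add_distrib, mul_add]
    have e2 : ∑ l : Fin m, 2 * (pd i θ x * ((g x)⁻¹ k l * g x l j)
        + pd j θ x * ((g x)⁻¹ k l * g x l i) - g x i j * ((g x)⁻¹ k l * pd l θ x))
        = 2 * (pd i θ x * (if k = j then (1:ℝ) else 0)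
          + pd j θ x * (if k = i then (1:ℝ) else 0)
          - g x i j * ∑ l, (g x)⁻¹ k l * pd l θ x) := by
      rw [← Finset.mul_sum, Finset.sum_sub_distrib, Finset.sum_add_distrib,
        ← Finset.mul_sum, ← Finset.mul_sum, ← Finset.mul_sum, hδ, hδ]
    rw [e2]; ring
  -- abbreviations
  set N : ℝ := ∑ p, ∑ q, (g x)⁻¹ p q * τ x p * τ x q with hNdef
  have hN0 : N ≠ 0 := ne_of_lt (hτtime x hx)
  set Q : ℝ := ∑ k, (∑ l, (g x)⁻¹ k l * τ x l) * pd k θ x with hQdef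
  -- the h-contraction
  have hH : ∀ i, (∑ k, h x i k * pd k θ x) = pd i θ x - τ x i * Q / N := by
    intro i
    have step : ∀ k : Fin m, h x i k * pd k θ x
        = (if i = k then pd k θ x else 0)
          - τ x i / N * ((∑ l, (g x)⁻¹ k l * τ x l) * pd k θ x) := by
      intro k
      rw [hh, ← hNdef]
      split_ifs <;> ring
    rw [Finset.sum_congr rfl fun k _ => step k, Finset.sum_sub_distrib,
      Finset.sum_ite_eq Finset.univ i (fun k => pd k θ x), if_pos (Finset.mem_univ i),
      ← Finset.mul_sum, ← hQdef]
    ring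
  -- covariant derivative computation
  have hcd : ∀ i j, covDeriv ghat τh i j x
      = E * ((κ x + P x) * g x i j + (α x i + pd i θ x) * τ x j
        + τ x i * (β x j - pd j θ x)) := by
    intro i j
    have hkey : pd i (fun y => τ y j) x - ∑ k, Christoffel g k i j x * τ x k
        = κ x * g x i j + α x i * τ x j + τ x i * β x j := heq x hx i j
    unfold covDeriv
    rw [hpdτh]
    have hsum : ∑ k, Christoffel ghat k i j x * τh x k
        = E * ((∑ k, Christoffel g k i j x * τ x k) + pd i θ x * τ x j + pd j θ x * τ x i
          - g x i j * P x) := by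
      have step : ∀ k : Fin m, Christoffel ghat k i j x * τh x k
          = E * (Christoffel g k i j x * τ x k)
            + (if k = j then E * (pd i θ x * τ x k) else 0)
            + (if k = i then E * (pd j θ x * τ x k) else 0)
            - E * (g x i j * ((∑ l, (g x)⁻¹ k l * pd l θ x) * τ x k)) := by
        intro k
        rw [hΓ, hτh, ← hEdef]
        split_ifs <;> ring
      rw [Finset.sum_congr rfl fun k _ => step k]
      rw [Finset.sum_sub_distrib, Finset.sum_add_distrib, Finset.sum_add_distrib,
        Finset.sum_ite_eq' Finset.univ j, Finset.sum_ite_eq' Finset.univ i,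
        if_pos (Finset.mem_univ j), if_pos (Finset.mem_univ i),
        ← Finset.mul_sum, ← Finset.mul_sum]
      have hT : ∑ k, g x i j * ((∑ l, (g x)⁻¹ k l * pd l θ x) * τ x k) = g x i j * P x := by
        rw [← Finset.mul_sum, hP]
        congr 1
        refine Finset.sum_congr rfl fun k _ => ?_
        rw [Finset.sum_mul]
        refine Finset.sum_congr rfl fun l _ => ?_
        ring
      rw [hT]
      ring
    rw [hsum]
    linear_combination E * hkey
  refine ⟨?_, ?_, ?_⟩
  · intro i j
    rw [hcd i j, hτh, hτh, hghat, hH, hH, ← hEdef]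
    show E * ((κ x + P x) * g x i j + (α x i + pd i θ x) * τ x j + τ x i * (β x j - pd j θ x))
      = (κ x + P x) * (E * g x i j) + (α x i + (pd i θ x - τ x i * Q / N)) * (E * τ x j)
        + E * τ x i * (β x j - (pd j θ x - τ x j * Q / N))
    ring
  · have step : ∀ i j : Fin m, (ghat x)⁻¹ i j * (α x i + ∑ k, h x i k * pd k θ x) * τh x j
        = (g x)⁻¹ i j * α x i * τ x j + (g x)⁻¹ i j * τ x j * pd i θ x
          - Q / N * ((g x)⁻¹ i j * τ x i * τ x j) := by
      intro i j
      rw [hginv, hτh, hH, ← hEdef]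
      field_simp
      ring
    rw [Finset.sum_congr rfl fun i _ => Finset.sum_congr rfl fun j _ => step i j]
    simp only [Finset.sum_add_distrib, Finset.sum_sub_distrib]
    have hB : ∑ i, ∑ j, (g x)⁻¹ i j * τ x j * pd i θ x = Q := by
      rw [hQdef]
      refine Finset.sum_congr rfl fun i _ => ?_
      rw [Finset.sum_mul]
    have hC : ∑ i, ∑ j, Q / N * ((g x)⁻¹ i j * τ x i * τ x j) = Q := by
      simp only [← Finset.mul_sum]
      rw [← hNdef, div_mul_cancel₀ _ hN0]
    rw [hατ x hx, hB, hC]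
    ring
  · have step : ∀ i j : Fin m, (ghat x)⁻¹ i j * (β x i - ∑ k, h x i k * pd k θ x) * τh x j
        = (g x)⁻¹ i j * β x i * τ x j - (g x)⁻¹ i j * τ x j * pd i θ x
          + Q / N * ((g x)⁻¹ i j * τ x i * τ x j) := by
      intro i j
      rw [hginv, hτh, hH, ← hEdef]
      field_simp
      ring
    rw [Finset.sum_congr rfl fun i _ => Finset.sum_congr rfl fun j _ => step i j]
    simp only [Finset.sum_add_distrib, Finset.sum_sub_distrib]
    have hB : ∑ i, ∑ j, (g x)⁻¹ i j * τ x j * pd i θ x = Q := by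
      rw [hQdef]
      refine Finset.sum_congr rfl fun i _ => ?_
      rw [Finset.sum_mul]
    have hC : ∑ i, ∑ j, Q / N * ((g x)⁻¹ i j * τ x i * τ x j) = Q := by
      simp only [← Finset.mul_sum]
      rw [← hNdef, div_mul_cancel₀ _ hN0]
    rw [hβτ x hx, hB, hC]
    ring
end
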